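/- arXiv:1511.03570 — 2 statements merged into one kernel-verified Lean document; each statement's English description precedes it below -/
import Mathlib

section
/- Let X = X₁ × ⋯ × X_n with |X_i| ≥ 2, let 1 ≤ k ≤ n, let A ∈ ℝ^{a×X} be a matrix whose rows span V_k(X), and let Y be a finite nonempty set. If X can be covered by |Y| radius-k Hamming balls, then there exists a family of vectors (v_y)_{y∈Y} in ℝ^a whose induced slicing (C_y)_{y∈Y} partitions X and for which the columns of A_{C_y} are linearly independent for every y ∈ Y; consequently, the maximum over all families (v_y)_{y∈Y} of ∑_{y∈Y} rank(A_{C_y}) equals |X|. -/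
open scoped Classical BigOperators

/-- `V_k(X)`: the span of all functions on `X = ∏ i, X_i` depending on at most `k`
coordinates. -/
noncomputable def Vk (n : ℕ) (q : Fin n → ℕ) (k : ℕ) :
    Submodule ℝ ((∀ i, Fin (q i)) → ℝ) :=
  Submodule.span ℝ
    {f : (∀ i, Fin (q i)) → ℝ | ∃ s : Finset (Fin n), s.card ≤ k ∧
      ∀ x x' : ∀ i, Fin (q i), (∀ i ∈ s, x i = x' i) → f x = f x'}

/-- The rank of the submatrix `A_C` of columns of `A` indexed by `C`. -/
noncomputable def colRank {m X : Type*} [Fintype m] (A : Matrix m X ℝ) (C : Set X) : ℕ :=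
  Module.finrank ℝ (Submodule.span ℝ ((fun x => fun i => A i x) '' C))

/-- The slicing induced by a family of vectors `(v_y)`. -/
def sliceSet {a : ℕ} {X Y : Type*} (A : Matrix (Fin a) X ℝ)
    (v : Y → Fin a → ℝ) (y : Y) : Set X :=
  {x | ∀ y', y' ≠ y → ∑ i, A i x * v y' i < ∑ i, A i x * v y i}

/-! Choose `v_y` with `⟨A_x, v_y⟩ = ε_y - d_H(x, c_y)`; this function lies in `V_k` because the
Hamming distance is a sum of one-coordinate functions. Distinct tie-breaking weights
`ε_y ∈ [0, 1)` make the induced slicing a partition of `X` into Voronoi cells of the centres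
`c_y`, each contained in a radius-`k` ball. On a subset of such a ball the columns of `A` are
independent: the point `x₀` farthest from the centre is separated from the others by the
indicator of agreeing with `x₀` on the at most `k` coordinates where `x₀` differs from the
centre, a function in `V_k`. Hence `∑ rank A_{C_y} = ∑ |C_y| = |X|`, while `|X|` bounds the sum
for every family because the slices are always disjoint. -/

open Function Set

lemma exists_injective_mem_Ico (Y : Type*) [Countable Y] :
    ∃ ε : Y → ℝ, Injective ε ∧ ∀ y, ε y ∈ Ico 0 1 := by
  obtain ⟨f, hf⟩ := Countable.exists_injective_nat Y
  have : Infinite (Ico (0 : ℝ) 1) := (Ico_infinite zero_lt_one).to_subtype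
  exact ⟨fun y => (Infinite.natEmbedding (Ico (0 : ℝ) 1) (f y) : ℝ),
    Subtype.val_injective.comp ((Infinite.natEmbedding _).injective.comp hf),
    fun y => Subtype.prop _⟩

lemma natCast_le_of_sub_natCast_le {e e' : ℝ} (he : e ∈ Ico 0 1) (he' : e' ∈ Ico 0 1)
    {d d' : ℕ} (h : e - d ≤ e' - d') : d' ≤ d := by
  have := Int.floor_mono h
  rw [Int.floor_sub_natCast, Int.floor_sub_natCast, Int.floor_eq_zero_iff.2 he,
    Int.floor_eq_zero_iff.2 he'] at this
  omega

lemma eq_of_sub_natCast_eq {e e' : ℝ} (he : e ∈ Ico 0 1) (he' : e' ∈ Ico 0 1)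
    {d d' : ℕ} (h : e - d = e' - d') : e = e' := by
  obtain rfl : d = d' := le_antisymm (natCast_le_of_sub_natCast_le he' he h.ge)
    (natCast_le_of_sub_natCast_le he he' h.le)
  linarith

section ColumnRank

variable {m X : Type*} [Fintype m] (A : Matrix m X ℝ)

lemma exists_vec_of_mem_span_range {f : X → ℝ}
    (hf : f ∈ Submodule.span ℝ (range A)) : ∃ v : m → ℝ, ∀ x, ∑ i, A i x * v i = f x := by
  obtain ⟨v, rfl⟩ := (Submodule.mem_span_range_iff_exists_fun ℝ).mp hf
  exact ⟨v, fun x => by simp [Finset.sum_apply, mul_comm]⟩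

lemma colRank_eq_finrank_span_range (C : Set X) :
    colRank A C = Module.finrank ℝ (Submodule.span ℝ (range fun x : C => fun i => A i x)) := by
  rw [colRank, image_eq_range]

lemma colRank_le_card (C : Set X) [Fintype C] : colRank A C ≤ Fintype.card C :=
  colRank_eq_finrank_span_range A C ▸ finrank_range_le_card _

lemma colRank_eq_card_of_linearIndependent {C : Set X} [Fintype C]
    (hC : LinearIndependent ℝ fun x : C => fun i => A i x) : colRank A C = Fintype.card C :=
  colRank_eq_finrank_span_range A C ▸ finrank_span_eq_card hC

lemma sum_mul_eq_zero_of_mem_span_range {ι : Type*} [Fintype ι] {p : ι → X} {g : ι → ℝ}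
    (hg : ∑ j, g j • (fun i => A i (p j)) = 0) {f : X → ℝ}
    (hf : f ∈ Submodule.span ℝ (range A)) : ∑ j, g j * f (p j) = 0 := by
  obtain ⟨w, rfl⟩ := (Submodule.mem_span_range_iff_exists_fun ℝ).mp hf
  simp only [Finset.sum_apply, Pi.smul_apply, smul_eq_mul, Finset.mul_sum]
  rw [Finset.sum_comm]
  refine Finset.sum_eq_zero fun i _ => ?_
  have hi : ∑ j, g j * A i (p j) = 0 := by simpa using congrFun hg i
  rw [← mul_zero (w i), ← hi, Finset.mul_sum]
  exact Finset.sum_congr rfl fun j _ => by ring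

lemma linearIndependent_cols_of_exists_separating {ι : Type*} [Fintype ι] (p : ι → X)
    (hsep : ∀ T : Finset ι, T.Nonempty → ∃ j ∈ T, ∃ f ∈ Submodule.span ℝ (range A),
      f (p j) ≠ 0 ∧ ∀ j' ∈ T, j' ≠ j → f (p j') = 0) :
    LinearIndependent ℝ fun j => fun i => A i (p j) := by
  classical
  rw [Fintype.linearIndependent_iff]
  intro g hg
  by_contra! hne
  obtain ⟨j, hj, f, hf, hfj, hf0⟩ := hsep (Finset.univ.filter (g · ≠ 0))
    (hne.imp fun j hj => by simpa using hj)
  have hgj : g j ≠ 0 := by simpa using hj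
  have hsum := sum_mul_eq_zero_of_mem_span_range A hg hf
  rw [Finset.sum_eq_single j (fun j' _ hj' => ?_) (by simp)] at hsum
  · exact mul_ne_zero hgj hfj hsum
  · by_cases hgj' : g j' = 0
    · rw [hgj', zero_mul]
    · rw [hf0 j' (by simpa using hgj') hj', mul_zero]

end ColumnRank

lemma eq_of_forall_mem_eq_of_hammingDist_le {ι : Type*} [Fintype ι] {β : ι → Type*}
    [∀ i, DecidableEq (β i)] {x y c : ∀ i, β i}
    (hagree : ∀ i ∈ Finset.univ.filter (fun i => y i ≠ c i), x i = y i)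
    (hdist : hammingDist x c ≤ hammingDist y c) : x = y := by
  have hsub :
      Finset.univ.filter (fun i => y i ≠ c i) ⊆ Finset.univ.filter (fun i => x i ≠ c i) :=
    fun i hi => by
      rw [Finset.mem_filter] at hi ⊢
      exact ⟨hi.1, hagree i (Finset.mem_filter.2 hi) ▸ hi.2⟩
  have heq := Finset.eq_of_subset_of_card_le hsub hdist
  funext i
  by_cases hi : y i = c i
  · have hx : i ∉ Finset.univ.filter (fun i => x i ≠ c i) := heq ▸ by simp [hi]
    simpa [hi] using hx
  · exact hagree i (by simpa using hi)

section InteractionSpace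

variable {n : ℕ} {q : Fin n → ℕ} {k : ℕ}

lemma mem_Vk_of_eq_of_forall_mem_eq {f : (∀ i, Fin (q i)) → ℝ} (s : Finset (Fin n))
    (hs : s.card ≤ k) (hf : ∀ x x' : ∀ i, Fin (q i), (∀ i ∈ s, x i = x' i) → f x = f x') :
    f ∈ Vk n q k :=
  Submodule.subset_span ⟨s, hs, hf⟩

lemma indicator_forall_mem_eq_mem_Vk (x₀ : ∀ i, Fin (q i)) {s : Finset (Fin n)}
    (hs : s.card ≤ k) :
    (fun x : ∀ i, Fin (q i) => if ∀ i ∈ s, x i = x₀ i then (1 : ℝ) else 0) ∈ Vk n q k :=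
  mem_Vk_of_eq_of_forall_mem_eq s hs fun x x' h => by
    simp only [show (∀ i ∈ s, x i = x₀ i) ↔ ∀ i ∈ s, x' i = x₀ i from
      forall₂_congr fun i hi => by rw [h i hi]]

lemma const_sub_hammingDist_mem_Vk (hk : 1 ≤ k) (c : ∀ i, Fin (q i)) (e : ℝ) :
    (fun x => e - (hammingDist x c : ℝ)) ∈ Vk n q k := by
  have hsum : (fun x => e - (hammingDist x c : ℝ)) =
      (fun _ => e) - ∑ i, fun x : ∀ i, Fin (q i) => if x i ≠ c i then (1 : ℝ) else 0 := by
    funext x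
    simp [hammingDist, Finset.card_filter, Finset.sum_apply]
  rw [hsum]
  refine sub_mem (mem_Vk_of_eq_of_forall_mem_eq ∅ (Nat.zero_le k) fun _ _ _ => rfl)
    (sum_mem fun i _ => mem_Vk_of_eq_of_forall_mem_eq {i} (by simpa using hk) fun x x' h => ?_)
  simp only [h i (Finset.mem_singleton_self i)]

lemma linearIndependent_cols_of_subset_ball {m : Type*} [Fintype m]
    {A : Matrix m (∀ i, Fin (q i)) ℝ} (hA : Vk n q k ≤ Submodule.span ℝ (range A))
    (c : ∀ i, Fin (q i)) {S : Set (∀ i, Fin (q i))} (hS : ∀ x ∈ S, hammingDist x c ≤ k) :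
    LinearIndependent ℝ fun x : S => fun i => A i x := by
  classical
  refine linearIndependent_cols_of_exists_separating A Subtype.val fun T hT => ?_
  obtain ⟨x₀, hx₀, hmax⟩ := T.exists_max_image (fun x => hammingDist (x : ∀ i, Fin (q i)) c) hT
  refine ⟨x₀, hx₀, _, hA (indicator_forall_mem_eq_mem_Vk x₀.1 (hS x₀ x₀.2)), by simp,
    fun x hx hne => ?_⟩
  rw [ite_eq_right_iff]
  exact fun hagree => absurd (Subtype.ext (eq_of_forall_mem_eq_of_hammingDist_le hagree
    (hmax x hx))) hne

end InteractionSpace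

section Slicing

variable {X Y : Type*} {a : ℕ} (A : Matrix (Fin a) X ℝ) (v : Y → Fin a → ℝ)

lemma sliceSet_disjoint {y y' : Y} (h : y ≠ y') : Disjoint (sliceSet A v y) (sliceSet A v y') :=
  disjoint_left.2 fun _ hx hx' => lt_asymm (hx y' h.symm) (hx' y h)

lemma exists_mem_sliceSet_of_injective [Finite Y] [Nonempty Y] {x : X}
    (h : Injective fun y => ∑ i, A i x * v y i) : ∃ y, x ∈ sliceSet A v y := by
  obtain ⟨y, hy⟩ := Finite.exists_max fun y => ∑ i, A i x * v y i
  exact ⟨y, fun y' hne => (hy y').lt_of_ne fun heq => hne (h heq)⟩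

variable [Fintype X] [Fintype Y]

lemma sum_card_sliceSet_eq_card_biUnion :
    ∑ y, Fintype.card (sliceSet A v y) =
      (Finset.univ.biUnion fun y => (sliceSet A v y).toFinset).card := by
  simp_rw [← Set.toFinset_card]
  exact (Finset.card_biUnion fun y _ y' _ h => disjoint_toFinset.2 (sliceSet_disjoint A v h)).symm

lemma sum_colRank_sliceSet_le_card : ∑ y, colRank A (sliceSet A v y) ≤ Fintype.card X :=
  calc ∑ y, colRank A (sliceSet A v y)
      ≤ ∑ y, Fintype.card (sliceSet A v y) := Finset.sum_le_sum fun _ _ => colRank_le_card A _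
    _ ≤ Fintype.card X := sum_card_sliceSet_eq_card_biUnion A v ▸ Finset.card_le_univ _

lemma sum_colRank_sliceSet_eq_card (hcover : ∀ x, ∃ y, x ∈ sliceSet A v y)
    (hli : ∀ y, LinearIndependent ℝ fun x : sliceSet A v y => fun i => A i x) :
    ∑ y, colRank A (sliceSet A v y) = Fintype.card X := by
  have hunion : (Finset.univ.biUnion fun y => (sliceSet A v y).toFinset) = Finset.univ :=
    Finset.eq_univ_of_forall fun x => by simpa using hcover x
  simp_rw [colRank_eq_card_of_linearIndependent A (hli _), sum_card_sliceSet_eq_card_biUnion,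
    hunion, Finset.card_univ]

end Slicing

lemma hammingDist_le_of_mem_sliceSet {n : ℕ} {q : Fin n → ℕ} {a : ℕ} {Y : Type*}
    {A : Matrix (Fin a) (∀ i, Fin (q i)) ℝ} {v : Y → Fin a → ℝ} {ε : Y → ℝ}
    (hε : ∀ y, ε y ∈ Ico 0 1) {c : Y → ∀ i, Fin (q i)}
    (hv : ∀ y x, ∑ i, A i x * v y i = ε y - hammingDist x (c y)) {x : ∀ i, Fin (q i)} {y : Y}
    (hx : x ∈ sliceSet A v y) (y' : Y) : hammingDist x (c y) ≤ hammingDist x (c y') := by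
  rcases eq_or_ne y' y with rfl | hne
  · exact le_rfl
  · have := hx y' hne
    rw [hv, hv] at this
    exact natCast_le_of_sub_natCast_le (hε y') (hε y) this.le

theorem tropical_mixture_k_interaction_covering_balls_general
    (n : ℕ) (q : Fin n → ℕ)
    (k : ℕ) (hk1 : 1 ≤ k)
    (a : ℕ) (A : Matrix (Fin a) (∀ i, Fin (q i)) ℝ)
    (hA : Submodule.span ℝ (Set.range A) = Vk n q k)
    {Y : Type*} [Fintype Y] [Nonempty Y]
    (c : Y → ∀ i, Fin (q i))
    (hcov : ∀ x : ∀ i, Fin (q i), ∃ y : Y, hammingDist x (c y) ≤ k) :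
    (∃ v : Y → Fin a → ℝ,
      (∀ x, ∃ y, x ∈ sliceSet A v y) ∧
      (∀ y y', y ≠ y' → Disjoint (sliceSet A v y) (sliceSet A v y')) ∧
      (∀ y : Y, LinearIndependent ℝ
        (fun x : sliceSet A v y => fun i => A i (x : ∀ i, Fin (q i))))) ∧
    IsGreatest {s : ℕ | ∃ v : Y → Fin a → ℝ, s = ∑ y : Y, colRank A (sliceSet A v y)}
      (Fintype.card (∀ i, Fin (q i))) := by
  obtain ⟨ε, hε_inj, hε⟩ := exists_injective_mem_Ico Y
  choose v hv using fun y =>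
    exists_vec_of_mem_span_range A (hA.ge (const_sub_hammingDist_mem_Vk hk1 (c y) (ε y)))
  have hcover : ∀ x, ∃ y, x ∈ sliceSet A v y := fun x =>
    exists_mem_sliceSet_of_injective A v fun y y' h =>
      hε_inj (eq_of_sub_natCast_eq (hε y) (hε y') (by simpa only [hv] using h))
  have hli : ∀ y, LinearIndependent ℝ fun x : sliceSet A v y => fun i => A i x := fun y =>
    linearIndependent_cols_of_subset_ball hA.ge (c y) fun x hx => by
      obtain ⟨y', hy'⟩ := hcov x
      exact (hammingDist_le_of_mem_sliceSet hε hv hx y').trans hy'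
  refine ⟨⟨v, hcover, fun y y' => sliceSet_disjoint A v, hli⟩,
    ⟨v, (sum_colRank_sliceSet_eq_card A v hcover hli).symm⟩, ?_⟩
  rintro s ⟨w, rfl⟩
  exact sum_colRank_sliceSet_le_card A w

/-- If the rows of `A` span `V_k(X)` and `X` can be covered by `|Y|`
radius-`k` Hamming balls, then there is a family `(v_y)` whose induced slicing partitions
`X` with the columns of each block `A_{C_y}` linearly independent; consequently the
maximum over all families of `∑_y rank(A_{C_y})` equals `|X|`. -/
theorem tropical_mixture_k_interaction_covering_balls
    (n : ℕ) (q : Fin n → ℕ) (hq : ∀ i, 2 ≤ q i)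
    (k : ℕ) (hk1 : 1 ≤ k) (hkn : k ≤ n)
    (a : ℕ) (A : Matrix (Fin a) (∀ i, Fin (q i)) ℝ)
    (hA : Submodule.span ℝ (Set.range A) = Vk n q k)
    {Y : Type*} [Fintype Y] [Nonempty Y]
    (c : Y → ∀ i, Fin (q i))
    (hcov : ∀ x : ∀ i, Fin (q i), ∃ y : Y, hammingDist x (c y) ≤ k) :
    (∃ v : Y → Fin a → ℝ,
      (∀ x, ∃ y, x ∈ sliceSet A v y) ∧
      (∀ y y', y ≠ y' → Disjoint (sliceSet A v y) (sliceSet A v y')) ∧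
      (∀ y : Y, LinearIndependent ℝ
        (fun x : sliceSet A v y => fun i => A i (x : ∀ i, Fin (q i))))) ∧
    IsGreatest {s : ℕ | ∃ v : Y → Fin a → ℝ, s = ∑ y : Y, colRank A (sliceSet A v y)}
      (Fintype.card (∀ i, Fin (q i))) :=
  tropical_mixture_k_interaction_covering_balls_general n q k hk1 a A hA c hcov
end

section
/- Let X = X₁ × ⋯ × X_n with |X_i| ≥ 2, let A ∈ ℝ^{a×X} be a matrix whose rows span V_1(X), and let Y be a finite nonempty set. (i) If X contains |Y| pairwise disjoint radius-one Hamming balls, then the maximum over all families of vectors (v_y)_{y∈Y} in ℝ^a of ∑_{y∈Y} rank(A_{C_y}), where (C_y)_{y∈Y} is the induced slicing, equals |Y| · (1 + ∑_{i∈[n]}(|X_i|−1)). (ii) If X can be covered by |Y| radius-one Hamming balls, then this maximum equals |X|. -/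
open scoped Classical BigOperators

/-- `V_1(X)`: the span of all functions on `X = ∏ i, X_i` depending on at most one
coordinate (the sufficient statistics space of the independence model). -/
noncomputable def V1 (n : ℕ) (q : Fin n → ℕ) :
    Submodule ℝ ((∀ i, Fin (q i)) → ℝ) :=
  Submodule.span ℝ
    {f : (∀ i, Fin (q i)) → ℝ | ∃ s : Finset (Fin n), s.card ≤ 1 ∧
      ∀ x x' : ∀ i, Fin (q i), (∀ i ∈ s, x i = x' i) → f x = f x'}

namespace TropAux

variable {n : ℕ} {q : Fin n → ℕ}

lemma mem_V1_single (i : Fin n) (F : Fin (q i) → ℝ) :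
    (fun x : ∀ j, Fin (q j) => F (x i)) ∈ V1 n q :=
  Submodule.subset_span ⟨{i}, by simp,
    fun x x' h => by show F (x i) = F (x' i); rw [h i (Finset.mem_singleton_self i)]⟩

lemma mem_V1_const (r : ℝ) : (fun _ : ∀ j, Fin (q j) => r) ∈ V1 n q :=
  Submodule.subset_span ⟨∅, by simp, fun _ _ _ => rfl⟩

lemma hd_eq (x y : ∀ i, Fin (q i)) :
    hammingDist x y = (Finset.univ.filter fun i => x i ≠ y i).card := rfl

lemma hamming_cast_eq (x c : ∀ i, Fin (q i)) :
    ((hammingDist x c : ℝ)) = ∑ i, (if x i = c i then (0:ℝ) else 1) := by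
  have h : hammingDist x c = ∑ i, (if x i = c i then 0 else 1) := by
    rw [hd_eq, Finset.card_filter]
    exact Finset.sum_congr rfl fun i _ => by by_cases h : x i = c i <;> simp [h]
  rw [h]
  push_cast
  exact Finset.sum_congr rfl fun i _ => by by_cases h : x i = c i <;> simp [h]

lemma mulHamming_mem_V1 (c : ∀ i, Fin (q i)) (M : ℝ) :
    (fun x => M * (hammingDist x c : ℝ)) ∈ V1 n q := by
  have h : (fun x : ∀ i, Fin (q i) => M * (hammingDist x c : ℝ))
      = ∑ i : Fin n, (fun x : ∀ j, Fin (q j) =>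
          (fun t => if t = c i then (0:ℝ) else M) (x i)) := by
    funext x
    rw [Finset.sum_apply, hamming_cast_eq, Finset.mul_sum]
    exact Finset.sum_congr rfl fun i _ => by by_cases h : x i = c i <;> simp [h]
  rw [h]
  exact Submodule.sum_mem _ fun i _ =>
    mem_V1_single i (fun t => if t = c i then (0:ℝ) else M)

lemma ball_cases {x c : ∀ i, Fin (q i)} (h : hammingDist x c ≤ 1) :
    x = c ∨ ∃ i, x i ≠ c i ∧ x = Function.update c i (x i) := by
  by_cases hx : x = c
  · exact Or.inl hx
  · right
    have hne : hammingDist x c ≠ 0 := hammingDist_ne_zero.2 hx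
    have h1 : (Finset.univ.filter fun j => x j ≠ c j).card = 1 := by
      rw [← hd_eq]; omega
    obtain ⟨i0, hi0⟩ := Finset.card_eq_one.mp h1
    have hx_i0 : x i0 ≠ c i0 := by
      have : i0 ∈ (Finset.univ.filter fun j => x j ≠ c j) := by
        rw [hi0]; exact Finset.mem_singleton_self i0
      exact (Finset.mem_filter.mp this).2
    have hother : ∀ j, j ≠ i0 → x j = c j := by
      intro j hj
      by_contra hne'
      have : j ∈ (Finset.univ.filter fun j => x j ≠ c j) := by simp [hne']
      rw [hi0] at this
      exact hj (Finset.mem_singleton.mp this)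
    refine ⟨i0, hx_i0, ?_⟩
    funext j
    by_cases hj : j = i0
    · subst hj; rw [Function.update_self]
    · rw [Function.update_of_ne hj]
      exact hother j hj

lemma update_ball (c : ∀ i, Fin (q i)) (i : Fin n) (t : Fin (q i)) :
    hammingDist (Function.update c i t) c ≤ 1 := by
  rw [hd_eq]
  refine le_trans (Finset.card_le_card ?_) (le_of_eq (Finset.card_singleton i))
  intro j hj
  rw [Finset.mem_filter] at hj
  rw [Finset.mem_singleton]
  by_contra hji
  exact hj.2 (by rw [Function.update_of_ne hji])

lemma exists_delta (c x0 : ∀ i, Fin (q i)) (hx0 : hammingDist x0 c ≤ 1) :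
    ∃ f, f ∈ V1 n q ∧ f x0 = 1 ∧ ∀ x, hammingDist x c ≤ 1 → x ≠ x0 → f x = 0 := by
  rcases ball_cases hx0 with h | ⟨i, hne, hupd⟩
  · subst h
    refine ⟨fun x => 1 + (-1) * (hammingDist x x0 : ℝ),
      Submodule.add_mem _ (mem_V1_const 1) (mulHamming_mem_V1 x0 (-1)), by simp, ?_⟩
    intro x hx hxx
    have h1 : hammingDist x x0 = 1 :=
      le_antisymm hx (Nat.one_le_iff_ne_zero.2 (hammingDist_ne_zero.2 hxx))
    show 1 + -1 * ((hammingDist x x0 : ℕ) : ℝ) = 0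
    rw [h1]; push_cast; ring
  · refine ⟨fun x => if x i = x0 i then 1 else 0,
      mem_V1_single i (fun t => if t = x0 i then (1:ℝ) else 0), by simp, ?_⟩
    intro x hx hxx
    have hxi : x i ≠ x0 i := by
      intro hxi
      apply hxx
      rcases ball_cases hx with h | ⟨j, hjne, hjupd⟩
      · exact absurd (show x i = c i by rw [h]) (fun h' => hne (by rw [← hxi, h']))
      · have hij : j = i := by
          by_contra hji
          have := congrFun hjupd i
          rw [Function.update_of_ne (fun h => hji h.symm)] at this
          exact hne (by rw [← hxi, this])
        subst hij
        rw [hjupd, hxi, ← hupd]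
    simp [hxi]

variable {a : ℕ} (A : Matrix (Fin a) (∀ i, Fin (q i)) ℝ)

lemma ball_cols_li (hA : Submodule.span ℝ (Set.range A) = V1 n q) (c : ∀ i, Fin (q i)) :
    LinearIndependent ℝ (fun x : {x : ∀ i, Fin (q i) // hammingDist x c ≤ 1} =>
      (fun i => A i x.1 : Fin a → ℝ)) := by
  rw [Fintype.linearIndependent_iff]
  intro g hg x0
  obtain ⟨f, hf, hf1, hf0⟩ := exists_delta c x0.1 x0.2
  rw [← hA] at hf
  obtain ⟨w, hw⟩ := (Submodule.mem_span_range_iff_exists_fun ℝ).mp hf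
  have hrow : ∀ i, ∑ x : {x // hammingDist x c ≤ 1}, g x * A i x.1 = 0 := by
    intro i
    have h := congrFun hg i
    rw [Finset.sum_apply] at h
    simpa using h
  have hfx : ∀ x : ∀ i, Fin (q i), f x = ∑ i, w i * A i x := by
    intro x
    have h := congrFun hw x
    rw [Finset.sum_apply] at h
    simpa using h.symm
  have hsum : ∑ x : {x // hammingDist x c ≤ 1}, g x * f x.1 = 0 := by
    calc ∑ x : {x // hammingDist x c ≤ 1}, g x * f x.1
        = ∑ x : {x // hammingDist x c ≤ 1}, ∑ i, g x * (w i * A i x.1) := by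
          simp_rw [hfx, Finset.mul_sum]
      _ = ∑ i, ∑ x : {x // hammingDist x c ≤ 1}, w i * (g x * A i x.1) := by
          rw [Finset.sum_comm]
          exact Finset.sum_congr rfl fun i _ => Finset.sum_congr rfl fun x _ => by ring
      _ = ∑ i, w i * ∑ x : {x // hammingDist x c ≤ 1}, g x * A i x.1 := by
          simp_rw [← Finset.mul_sum]
      _ = 0 := by simp [hrow]
  rw [Finset.sum_eq_single x0 (fun x _ hx => by
      rw [hf0 x.1 x.2 (fun h => hx (Subtype.ext h)), mul_zero])
    (fun h => absurd (Finset.mem_univ x0) h)] at hsum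
  rw [hf1, mul_one] at hsum
  exact hsum

/-- Index type for the radius-one Hamming ball around `c`. -/
abbrev BIdx (n : ℕ) (q : Fin n → ℕ) (c : ∀ i, Fin (q i)) : Type :=
  Unit ⊕ (Σ i : Fin n, {t : Fin (q i) // t ≠ c i})

/-- The points of the radius-one Hamming ball around `c`. -/
def bpt (c : ∀ i, Fin (q i)) : BIdx n q c → ∀ i, Fin (q i)
  | Sum.inl _ => c
  | Sum.inr ⟨i, t, _⟩ => Function.update c i t

lemma card_BIdx (c : ∀ i, Fin (q i)) :
    Fintype.card (BIdx n q c) = 1 + ∑ i, (q i - 1) := by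
  simp [BIdx, Fintype.card_subtype_compl]

lemma bpt_mem_ball (c : ∀ i, Fin (q i)) (k : BIdx n q c) :
    hammingDist (bpt c k) c ≤ 1 := by
  rcases k with _ | ⟨i, t, ht⟩
  · simp [bpt]
  · exact update_ball c i t

lemma bpt_injective (c : ∀ i, Fin (q i)) : Function.Injective (bpt c) := by
  rintro (⟨⟩ | ⟨i, t, ht⟩) (⟨⟩ | ⟨j, s, hs⟩) h
  · rfl
  · exfalso
    have := congrFun h j
    rw [show bpt c (Sum.inl ()) = c from rfl,
        show bpt c (Sum.inr ⟨j, s, hs⟩) = Function.update c j s from rfl,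
        Function.update_self] at this
    exact hs this.symm
  · exfalso
    have := congrFun h i
    rw [show bpt c (Sum.inl ()) = c from rfl,
        show bpt c (Sum.inr ⟨i, t, ht⟩) = Function.update c i t from rfl,
        Function.update_self] at this
    exact ht this
  · have hji : i = j := by
      by_contra hij
      have h2 := congrFun h i
      rw [show bpt c (Sum.inr ⟨i, t, ht⟩) = Function.update c i t from rfl,
          show bpt c (Sum.inr ⟨j, s, hs⟩) = Function.update c j s from rfl,
          Function.update_self, Function.update_of_ne hij] at h2
      exact ht h2
    subst hji
    have h2 := congrFun h i
    rw [show bpt c (Sum.inr ⟨i, t, ht⟩) = Function.update c i t from rfl,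
        show bpt c (Sum.inr ⟨i, s, hs⟩) = Function.update c i s from rfl,
        Function.update_self, Function.update_self] at h2
    subst h2
    rfl

lemma V1_formula {f : (∀ i, Fin (q i)) → ℝ} (hf : f ∈ V1 n q) (c x : ∀ i, Fin (q i)) :
    f x = f c + ∑ i, (f (Function.update c i (x i)) - f c) := by
  induction hf using Submodule.span_induction with
  | mem g hg =>
    obtain ⟨s, hs, hdep⟩ := hg
    rcases s.eq_empty_or_nonempty with rfl | ⟨i0, hi0⟩
    · have hconst : ∀ x', g x' = g c := fun x' => hdep x' c (by simp)
      simp [hconst]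
    · have hsingle : ∀ j ∈ s, j = i0 := fun j hj =>
        Finset.card_le_one.mp hs j hj i0 hi0
      have key : ∀ x', g x' = g (Function.update c i0 (x' i0)) := by
        intro x'
        refine hdep _ _ (fun j hj => ?_)
        rw [hsingle j hj, Function.update_self]
      rw [Finset.sum_eq_single i0 (fun j _ hj => ?_) (fun h => absurd (Finset.mem_univ i0) h)]
      · rw [key x]; ring
      · have h2 : g (Function.update c j (x j)) = g c := by
          rw [key (Function.update c j (x j)),
              Function.update_of_ne (fun h => hj h.symm) (x j) c,
              Function.update_eq_self]
        rw [h2, sub_self]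
  | zero => simp
  | add g h hg hh ihg ihh =>
    simp only [Pi.add_apply]
    rw [ihg, ihh]
    have h3 : ∑ i : Fin n, (g (Function.update c i (x i)) + h (Function.update c i (x i))
          - (g c + h c))
        = ∑ i : Fin n, ((g (Function.update c i (x i)) - g c)
          + (h (Function.update c i (x i)) - h c)) :=
      Finset.sum_congr rfl fun i _ => by ring
    rw [h3, Finset.sum_add_distrib]; ring
  | smul r g hg ihg =>
    simp only [Pi.smul_apply, smul_eq_mul]
    rw [ihg, mul_add, Finset.mul_sum]
    congr 1
    exact Finset.sum_congr rfl fun i _ => by ring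

lemma finrank_V1_le (c : ∀ i, Fin (q i)) :
    Module.finrank ℝ (V1 n q) ≤ 1 + ∑ i, (q i - 1) := by
  rw [← card_BIdx (n := n) (q := q) c]
  have L : (V1 n q) →ₗ[ℝ] (BIdx n q c → ℝ) :=
    (LinearMap.pi (fun k => LinearMap.proj (bpt c k))).comp (V1 n q).subtype
  have hinj : Function.Injective
      ((LinearMap.pi (fun k => LinearMap.proj (φ := fun _ => ℝ) (bpt c k))).comp
        (V1 n q).subtype) := by
    rw [← LinearMap.ker_eq_bot, LinearMap.ker_eq_bot']
    intro f hf0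
    apply Subtype.ext
    funext x
    have hb : ∀ k : BIdx n q c, (f : (∀ i, Fin (q i)) → ℝ) (bpt c k) = 0 :=
      fun k => congrFun hf0 k
    have hform := V1_formula f.2 c x
    have hc0 : (f : (∀ i, Fin (q i)) → ℝ) c = 0 := hb (Sum.inl ())
    have hupd : ∀ i, (f : (∀ i, Fin (q i)) → ℝ) (Function.update c i (x i)) = 0 := by
      intro i
      by_cases h : x i = c i
      · rw [h, Function.update_eq_self]; exact hc0
      · exact hb (Sum.inr ⟨i, x i, h⟩)
    rw [hform, hc0]
    simp [hupd]
  calc Module.finrank ℝ (V1 n q) ≤ Module.finrank ℝ (BIdx n q c → ℝ) :=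
        LinearMap.finrank_le_finrank_of_injective hinj
    _ = Fintype.card (BIdx n q c) := Module.finrank_fintype_fun_eq_card ℝ

lemma colRank_le_dimV1 (hA : Submodule.span ℝ (Set.range A) = V1 n q)
    (C : Set (∀ i, Fin (q i))) :
    colRank A C ≤ Module.finrank ℝ (V1 n q) := by
  have h1 : Submodule.span ℝ ((fun x (i : Fin a) => A i x) '' C)
      ≤ Submodule.span ℝ (Set.range A.transpose) := by
    apply Submodule.span_mono
    rintro _ ⟨x, -, rfl⟩
    exact ⟨x, rfl⟩
  calc colRank A C ≤ Module.finrank ℝ (Submodule.span ℝ (Set.range A.transpose)) :=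
        Submodule.finrank_mono h1
    _ = A.rank := (Matrix.rank_eq_finrank_span_cols A).symm
    _ = Module.finrank ℝ (Submodule.span ℝ (Set.range A)) := Matrix.rank_eq_finrank_span_row A
    _ = Module.finrank ℝ (V1 n q) := by rw [hA]

lemma le_colRank_of {ι : Type} [Fintype ι] (C : Set (∀ i, Fin (q i)))
    (u : ι → ∀ i, Fin (q i)) (hu : ∀ k, u k ∈ C)
    (hli : LinearIndependent ℝ (fun k => (fun i => A i (u k) : Fin a → ℝ))) :
    Fintype.card ι ≤ colRank A C := by
  have h1 := finrank_span_eq_card hli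
  rw [colRank, ← h1]
  apply Submodule.finrank_mono
  apply Submodule.span_mono
  rintro _ ⟨k, rfl⟩
  exact ⟨u k, hu k, rfl⟩

set_option maxHeartbeats 1000000 in
lemma colRank_eq_card_of_subset_ball (hA : Submodule.span ℝ (Set.range A) = V1 n q)
    (c : ∀ i, Fin (q i)) {C : Set (∀ i, Fin (q i))} (hC : ∀ x ∈ C, hammingDist x c ≤ 1) :
    colRank A C = C.toFinset.card := by
  have hli0 := ball_cols_li A hA c
  have hincl : ∀ x : C, hammingDist (x : ∀ i, Fin (q i)) c ≤ 1 := fun x => hC x.1 x.2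
  have hli : LinearIndependent ℝ (fun x : C => (fun i => A i x.1 : Fin a → ℝ)) := by
    have h := hli0.comp (fun x : C => (⟨x.1, hincl x⟩ : {x // hammingDist x c ≤ 1}))
      (fun x y h => Subtype.ext (show x.1 = y.1 from
        congrArg (fun z : {x // hammingDist x c ≤ 1} => z.1) h))
    exact h
  rw [colRank, Set.image_eq_range, finrank_span_eq_card hli, Set.toFinset_card]

lemma exists_v {Y : Type*} (hA : Submodule.span ℝ (Set.range A) = V1 n q)
    (g : Y → (∀ i, Fin (q i)) → ℝ) (hg : ∀ y, g y ∈ V1 n q) :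
    ∃ v : Y → Fin a → ℝ, ∀ y x, ∑ i, A i x * v y i = g y x := by
  have h : ∀ y, ∃ w : Fin a → ℝ, ∑ i, w i • A i = g y := fun y =>
    (Submodule.mem_span_range_iff_exists_fun ℝ).mp (by rw [hA]; exact hg y)
  choose v hv using h
  refine ⟨v, fun y x => ?_⟩
  have h2 := congrFun (hv y) x
  rw [Finset.sum_apply] at h2
  simp only [Pi.smul_apply, smul_eq_mul] at h2
  rw [← h2]
  exact Finset.sum_congr rfl fun i _ => mul_comm _ _

lemma slice_disj {Y : Type*} (v : Y → Fin a → ℝ) {y y' : Y} (h : y ≠ y') :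
    Disjoint (sliceSet A v y) (sliceSet A v y') := by
  rw [Set.disjoint_left]
  intro x hx hx'
  exact lt_asymm (hx y' (Ne.symm h)) (hx' y h)

lemma sum_colRank_le_card {Y : Type*} [Fintype Y] (v : Y → Fin a → ℝ) :
    ∑ y : Y, colRank A (sliceSet A v y) ≤ Fintype.card (∀ i, Fin (q i)) := by
  have h1 : ∀ y, colRank A (sliceSet A v y) ≤ (sliceSet A v y).toFinset.card := by
    intro y
    calc colRank A (sliceSet A v y)
        ≤ ((fun x (i : Fin a) => A i x) '' (sliceSet A v y)).toFinset.card :=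
          finrank_span_le_card _
      _ ≤ (sliceSet A v y).toFinset.card := by
          rw [Set.toFinset_image]; exact Finset.card_image_le
  calc ∑ y : Y, colRank A (sliceSet A v y)
      ≤ ∑ y : Y, (sliceSet A v y).toFinset.card :=
        Finset.sum_le_sum fun y _ => h1 y
    _ = (Finset.univ.biUnion (fun y => (sliceSet A v y).toFinset)).card :=
        (Finset.card_biUnion (fun y _ y' _ h =>
          Set.disjoint_toFinset.mpr (slice_disj A v h))).symm
    _ ≤ Fintype.card (∀ i, Fin (q i)) := Finset.card_le_univ _

end TropAux

/-- Let the rows of `A` span `V_1(X)` (independence model).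
(i) If `X` contains `|Y|` pairwise disjoint radius-one Hamming balls, then the maximum
over all `(v_y)` of `∑_y rank(A_{C_y})` equals `|Y|·(1 + ∑_i (|X_i|−1))`.
(ii) If `X` can be covered by `|Y|` radius-one Hamming balls, this maximum is `|X|`. -/
theorem tropical_secant_independence_model
    (n : ℕ) (q : Fin n → ℕ) (hq : ∀ i, 2 ≤ q i) (hn : 1 ≤ n)
    (a : ℕ) (A : Matrix (Fin a) (∀ i, Fin (q i)) ℝ)
    (hA : Submodule.span ℝ (Set.range A) = V1 n q)
    {Y : Type*} [Fintype Y] [Nonempty Y] :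
    ((∃ c : Y → ∀ i, Fin (q i), ∀ y y', y ≠ y' →
        ∀ x, ¬(hammingDist x (c y) ≤ 1 ∧ hammingDist x (c y') ≤ 1)) →
      IsGreatest {s : ℕ | ∃ v : Y → Fin a → ℝ, s = ∑ y : Y, colRank A (sliceSet A v y)}
        (Fintype.card Y * (1 + ∑ i : Fin n, (q i - 1)))) ∧
    ((∃ c : Y → ∀ i, Fin (q i), ∀ x, ∃ y, hammingDist x (c y) ≤ 1) →
      IsGreatest {s : ℕ | ∃ v : Y → Fin a → ℝ, s = ∑ y : Y, colRank A (sliceSet A v y)}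
        (Fintype.card (∀ i, Fin (q i)))) := by
  have c0 : ∀ i, Fin (q i) := fun i => ⟨0, by have := hq i; omega⟩
  constructor
  · rintro ⟨c, hc⟩
    obtain ⟨v, hv⟩ := TropAux.exists_v A hA (fun y x => (-1) * (hammingDist x (c y) : ℝ))
      (fun y => TropAux.mulHamming_mem_V1 (c y) (-1))
    have hv' : ∀ y x, ∑ i, A i x * v y i = (-1) * (hammingDist x (c y) : ℝ) := hv
    have hball : ∀ y x, hammingDist x (c y) ≤ 1 → x ∈ sliceSet A v y := by
      intro y x hx
      simp only [sliceSet, Set.mem_setOf_eq]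
      intro y' hy'
      rw [hv' y x, hv' y' x]
      have h2 : ¬ (hammingDist x (c y) ≤ 1 ∧ hammingDist x (c y') ≤ 1) :=
        hc y y' (Ne.symm hy') x
      have h3 : hammingDist x (c y) < hammingDist x (c y') := by
        have := fun h => h2 ⟨hx, h⟩
        omega
      have h4 : (hammingDist x (c y) : ℝ) < hammingDist x (c y') := by exact_mod_cast h3
      linarith
    have hrank : ∀ y, colRank A (sliceSet A v y) = 1 + ∑ i, (q i - 1) := by
      intro y
      refine le_antisymm ((TropAux.colRank_le_dimV1 A hA _).trans
        (TropAux.finrank_V1_le (c y))) ?_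
      rw [← TropAux.card_BIdx (n := n) (q := q) (c y)]
      refine TropAux.le_colRank_of A _ (TropAux.bpt (c y))
        (fun k => hball y _ (TropAux.bpt_mem_ball (c y) k)) ?_
      have h := (TropAux.ball_cols_li A hA (c y)).comp
        (fun k => (⟨TropAux.bpt (c y) k, TropAux.bpt_mem_ball (c y) k⟩ :
          {x // hammingDist x (c y) ≤ 1}))
        (fun k1 k2 h => TropAux.bpt_injective (c y)
          (congrArg (fun z : {x // hammingDist x (c y) ≤ 1} => z.1) h))
      exact h
    constructor
    · refine ⟨v, ?_⟩
      rw [Finset.sum_congr rfl (fun y _ => hrank y), Finset.sum_const, Finset.card_univ,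
        smul_eq_mul]
    · rintro s ⟨v', rfl⟩
      calc ∑ y : Y, colRank A (sliceSet A v' y)
          ≤ ∑ _y : Y, (1 + ∑ i, (q i - 1)) := Finset.sum_le_sum fun y _ =>
            (TropAux.colRank_le_dimV1 A hA _).trans (TropAux.finrank_V1_le c0)
        _ = Fintype.card Y * (1 + ∑ i, (q i - 1)) := by
            rw [Finset.sum_const, Finset.card_univ, smul_eq_mul]
  · rintro ⟨c, hcov⟩
    have hN0 : 0 < Fintype.card Y := Fintype.card_pos
    set e := Fintype.equivFin Y with he
    set t : Y → ℝ := fun y => ((e y : ℕ) : ℝ) / (Fintype.card Y) with ht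
    have ht0 : ∀ y, 0 ≤ t y := fun y => div_nonneg (Nat.cast_nonneg _) (Nat.cast_nonneg _)
    have ht1 : ∀ y, t y < 1 := by
      intro y
      rw [ht]
      rw [div_lt_one (by exact_mod_cast hN0)]
      exact_mod_cast (e y).2
    have htinj : Function.Injective t := by
      intro y y' h
      rw [ht] at h
      have h3 : (e y : ℕ) = (e y' : ℕ) := by
        field_simp at h
        exact_mod_cast h
      exact e.injective (Fin.ext h3)
    obtain ⟨v, hv⟩ := TropAux.exists_v A hA
      (fun y x => (-2) * (hammingDist x (c y) : ℝ) + t y)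
      (fun y => Submodule.add_mem _ (TropAux.mulHamming_mem_V1 (c y) (-2))
        (TropAux.mem_V1_const (t y)))
    have hv' : ∀ y x, ∑ i, A i x * v y i = (-2) * (hammingDist x (c y) : ℝ) + t y := hv
    have hcover : ∀ x, ∃ y, x ∈ sliceSet A v y := by
      intro x
      obtain ⟨y0, -, hmax⟩ := Finset.exists_max_image Finset.univ
        (fun y => (-2) * (hammingDist x (c y) : ℝ) + t y) Finset.univ_nonempty
      refine ⟨y0, ?_⟩
      simp only [sliceSet, Set.mem_setOf_eq]
      intro y' hy'
      rw [hv' y' x, hv' y0 x]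
      have hle : (-2) * (hammingDist x (c y') : ℝ) + t y'
          ≤ (-2) * (hammingDist x (c y0) : ℝ) + t y0 := hmax y' (Finset.mem_univ y')
      rcases lt_or_eq_of_le hle with h | h
      · exact h
      · exfalso
        have hd : hammingDist x (c y') = hammingDist x (c y0) := by
          by_contra hdne
          have hb1 := ht0 y'; have hb2 := ht1 y'; have hb3 := ht0 y0; have hb4 := ht1 y0
          rcases Nat.lt_or_ge (hammingDist x (c y')) (hammingDist x (c y0)) with hlt | hge
          · have h5 : (hammingDist x (c y') : ℝ) + 1 ≤ hammingDist x (c y0) := by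
              exact_mod_cast hlt
            linarith
          · have hlt2 : hammingDist x (c y0) < hammingDist x (c y') := by omega
            have h5 : (hammingDist x (c y0) : ℝ) + 1 ≤ hammingDist x (c y') := by
              exact_mod_cast hlt2
            linarith
        rw [hd] at h
        have h6 : t y' = t y0 := by linarith
        exact hy' (htinj h6)
    have hsub : ∀ y, ∀ x ∈ sliceSet A v y, hammingDist x (c y) ≤ 1 := by
      intro y x hx
      obtain ⟨y2, hy2⟩ := hcov x
      by_cases h : y2 = y
      · exact h ▸ hy2
      · have h2 := hx y2 h
        rw [hv' y2 x, hv' y x] at h2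
        have hb1 := ht0 y2; have hb2 := ht1 y2; have hb3 := ht0 y; have hb4 := ht1 y
        have h3 : (hammingDist x (c y) : ℝ) < hammingDist x (c y2) + 1 := by linarith
        have h4 : hammingDist x (c y) < hammingDist x (c y2) + 1 := by exact_mod_cast h3
        omega
    constructor
    · refine ⟨v, ?_⟩
      have hcards : ∀ y, colRank A (sliceSet A v y) = (sliceSet A v y).toFinset.card :=
        fun y => TropAux.colRank_eq_card_of_subset_ball A hA (c y) (hsub y)
      rw [Finset.sum_congr rfl (fun y _ => hcards y),
        ← Finset.card_biUnion (fun y _ y' _ h =>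
          Set.disjoint_toFinset.mpr (TropAux.slice_disj A v h))]
      have huniv : Finset.univ.biUnion (fun y : Y => (sliceSet A v y).toFinset)
          = Finset.univ := by
        apply Finset.eq_univ_iff_forall.mpr
        intro x
        obtain ⟨y, hy⟩ := hcover x
        exact Finset.mem_biUnion.mpr ⟨y, Finset.mem_univ y, Set.mem_toFinset.mpr hy⟩
      rw [huniv, Finset.card_univ]
    · rintro s ⟨v', rfl⟩
      exact TropAux.sum_colRank_le_card A v'
end
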